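/- arXiv:0804.0658 — 2 statements merged into one kernel-verified Lean document; each statement's English description precedes it below -/
import Mathlib

section
/- A finite mixture of Gaussian densities is identifiable: if ∑_{i=1}^p πᵢ φ(·; mᵢ, σᵢ²) = ∑_{j=1}^q ρⱼ φ(·; m'ⱼ, τⱼ²) as functions on ℝ, where all weights are positive, the pairs (mᵢ, σᵢ²) are distinct, and the pairs (m'ⱼ, τⱼ²) are distinct, then p = q and the collections {(πᵢ, mᵢ, σᵢ²)} and {(ρⱼ, m'ⱼ, τⱼ²)} coincide up to permutation. -/
noncomputable def gaussDensity (m v x : ℝ) : ℝ :=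
  (Real.sqrt (2 * Real.pi * v))⁻¹ * Real.exp (-(x - m) ^ 2 / (2 * v))

/-!
Order the components lexicographically by (variance, mean). If `(v₁, m₁) < (v₀, m₀)` then
`φ(x; m₁, v₁) / φ(x; m₀, v₀)` is the exponential of a quadratic in `x` tending to `-∞`, so it
tends to `0` as `x → +∞`. Hence in any vanishing finite linear combination the coefficient of the
largest component vanishes, and by induction the Gaussian densities are linearly independent.
Both mixtures then have the same coefficient vector, which, since the weights are nonzero and
the parameters distinct, pairs up their components.
-/

open Filter Asymptotics Function

theorem LinearIndependent.of_isLittleO {ι α 𝕜 : Type*} [LinearOrder ι] [NormedField 𝕜]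
    {l : Filter α} {f : ι → α → 𝕜} (hf : ∀ i, ∃ᶠ x in l, f i x ≠ 0)
    (hlt : ∀ ⦃i j⦄, i < j → f i =o[l] f j) : LinearIndependent 𝕜 f := by
  classical
  rw [linearIndependent_iff']
  intro s c
  induction s using Finset.induction_on_max with
  | empty => simp
  | insert a s hlt_a ih =>
    intro hsum
    rw [Finset.sum_insert (fun ha => (hlt_a a ha).false)] at hsum
    have hca : c a = 0 := by
      by_contra hca
      have hsmall : (∑ i ∈ s, c i • f i) =o[l] f a :=
        IsLittleO.sum fun i hi => (hlt (hlt_a i hi)).const_smul_left (c i)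
      rw [eq_neg_of_add_eq_zero_right hsum] at hsmall
      exact isLittleO_irrefl (hf a)
        ((isLittleO_const_smul_left hca).1 (by simpa using hsmall.neg_left))
    rw [hca, zero_smul, zero_add] at hsum
    intro i hi
    rcases Finset.mem_insert.1 hi with rfl | hi
    · exact hca
    · exact ih hsum i hi

theorem tendsto_quadratic_atTop {a b c : ℝ} (h : 0 < a ∨ a = 0 ∧ 0 < b) :
    Tendsto (fun x => a * x ^ 2 + b * x + c) atTop atTop := by
  refine tendsto_atTop_add_const_right _ c ?_
  rcases h with ha | ⟨rfl, hb⟩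
  · have : Tendsto (fun x : ℝ => x * (a * x + b)) atTop atTop :=
      tendsto_id.atTop_mul_atTop₀ (tendsto_atTop_add_const_right _ b (tendsto_id.const_mul_atTop ha))
    exact this.congr fun x => by ring
  · simpa using tendsto_id.const_mul_atTop hb

namespace Finsupp

variable {ι α M : Type*} [Fintype ι] [AddCommMonoid M] {a : ι → α}

theorem sum_single_apply_self (ha : Injective a) (π : ι → M) (k : ι) :
    (∑ i, single (a i) (π i)) (a k) = π k := by
  rw [finsetSum_apply, Finset.sum_eq_single k (fun i _ hik => single_eq_of_ne (ha.ne hik).symm)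
    (fun hk => absurd (Finset.mem_univ k) hk), single_eq_same]

theorem coe_support_sum_single (ha : Injective a) {π : ι → M} (hπ : ∀ i, π i ≠ 0) :
    ↑(∑ i, single (a i) (π i)).support = Set.range a := by
  ext x
  rw [Finset.mem_coe, mem_support_iff]
  constructor
  · contrapose!
    intro hx
    rw [finsetSum_apply]
    exact Finset.sum_eq_zero fun i _ => single_eq_of_ne fun h => hx ⟨i, h.symm⟩
  · rintro ⟨k, rfl⟩
    rw [sum_single_apply_self ha]
    exact hπ k

theorem exists_equiv_of_sum_single_eq {κ : Type*} [Fintype κ] {b : κ → α}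
    (ha : Injective a) (hb : Injective b) {π : ι → M} {ρ : κ → M}
    (hπ : ∀ i, π i ≠ 0) (hρ : ∀ j, ρ j ≠ 0)
    (h : ∑ i, single (a i) (π i) = ∑ j, single (b j) (ρ j)) :
    ∃ e : ι ≃ κ, ∀ i, b (e i) = a i ∧ ρ (e i) = π i := by
  have hrange : Set.range a = Set.range b := by
    rw [← coe_support_sum_single ha hπ, ← coe_support_sum_single hb hρ, h]
  let e := (Equiv.ofInjective a ha).trans
    ((Equiv.setCongr hrange).trans (Equiv.ofInjective b hb).symm)
  have hbe : ∀ i, b (e i) = a i := fun i => Equiv.apply_ofInjective_symm hb _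
  refine ⟨e, fun i => ⟨hbe i, ?_⟩⟩
  rw [← sum_single_apply_self hb ρ, hbe, ← h, sum_single_apply_self ha]

end Finsupp

theorem gaussDensity_pos {m v : ℝ} (hv : 0 < v) (x : ℝ) : 0 < gaussDensity m v x := by
  unfold gaussDensity
  positivity

theorem gaussDensity_isLittleO {m₀ v₀ m₁ v₁ : ℝ} (hv₀ : 0 < v₀) (hv₁ : 0 < v₁)
    (h : toLex (v₁, m₁) < toLex (v₀, m₀)) :
    gaussDensity m₁ v₁ =o[atTop] gaussDensity m₀ v₀ := by
  have hc : (Real.sqrt (2 * Real.pi * v₀))⁻¹ ≠ 0 := by positivity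
  change (fun x => _ * _) =o[atTop] (fun x => _ * _)
  rw [isLittleO_const_mul_right_iff hc]
  refine (Real.isLittleO_exp_comp_exp_comp.2 ?_).const_mul_left _
  have hq := tendsto_quadratic_atTop (a := 1 / (2 * v₁) - 1 / (2 * v₀)) (b := m₀ / v₀ - m₁ / v₁)
    (c := m₁ ^ 2 / (2 * v₁) - m₀ ^ 2 / (2 * v₀)) ?_
  · refine hq.congr fun x => ?_
    field_simp
    ring
  · rcases Prod.Lex.toLex_lt_toLex.1 h with hv | ⟨rfl, hm⟩
    · exact .inl (sub_pos.2 (one_div_lt_one_div_of_lt (by positivity) (by linarith)))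
    · exact .inr ⟨sub_self _, sub_pos.2 (by gcongr)⟩

-- Indexing by `toLex (variance, mean)` makes `<` mean "thinner tail at `+∞`".
theorem linearIndependent_gaussDensity :
    LinearIndependent ℝ fun z : {z : ℝ ×ₗ ℝ // 0 < (ofLex z).1} =>
      gaussDensity (ofLex z.1).2 (ofLex z.1).1 :=
  .of_isLittleO (fun z => .of_forall fun x => (gaussDensity_pos z.2 x).ne')
    fun z w hzw => gaussDensity_isLittleO w.2 z.2 hzw

theorem stmt9 (p q : ℕ) (π : Fin p → ℝ) (m v : Fin p → ℝ)
    (ρ : Fin q → ℝ) (m' τ : Fin q → ℝ)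
    (hπ : ∀ i, 0 < π i) (hρ : ∀ j, 0 < ρ j)
    (hv : ∀ i, 0 < v i) (hτ : ∀ j, 0 < τ j)
    (hdp : Function.Injective (fun i => (m i, v i)))
    (hdq : Function.Injective (fun j => (m' j, τ j)))
    (heq : ∀ x : ℝ, ∑ i, π i * gaussDensity (m i) (v i) x =
      ∑ j, ρ j * gaussDensity (m' j) (τ j) x) :
    p = q ∧ ∃ e : Fin p ≃ Fin q, ∀ i,
      ρ (e i) = π i ∧ m' (e i) = m i ∧ τ (e i) = v i := by
  let a : Fin p → {z : ℝ ×ₗ ℝ // 0 < (ofLex z).1} := fun i => ⟨toLex (v i, m i), hv i⟩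
  let b : Fin q → {z : ℝ ×ₗ ℝ // 0 < (ofLex z).1} := fun j => ⟨toLex (τ j, m' j), hτ j⟩
  have ha : Injective a := fun i i' h =>
    hdp <| Prod.swap_injective <| congrArg (fun z => ofLex z.1) h
  have hb : Injective b := fun j j' h =>
    hdq <| Prod.swap_injective <| congrArg (fun z => ofLex z.1) h
  have hcoeff : ∑ i, Finsupp.single (a i) (π i) = ∑ j, Finsupp.single (b j) (ρ j) :=
    linearIndependent_gaussDensity <| by
      ext x
      simp only [map_sum, Finsupp.linearCombination_single, Finset.sum_apply, Pi.smul_apply,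
        smul_eq_mul]
      exact heq x
  obtain ⟨e, he⟩ := Finsupp.exists_equiv_of_sum_single_eq ha hb
    (fun i => (hπ i).ne') (fun j => (hρ j).ne') hcoeff
  refine ⟨Fin.equiv_iff_eq.1 ⟨e⟩, e, fun i => ?_⟩
  obtain ⟨hparam, hweight⟩ := he i
  obtain ⟨hvar, hmean⟩ := Prod.mk.inj (congrArg (fun z => ofLex z.1) hparam)
  exact ⟨hweight, hmean, hvar⟩
end

section
/- Let q₁,…,q_r ≥ 0 with ∑ⱼ qⱼ = 1 and let θ₁,…,θ_r, θ⁰ ∈ ℝ^d. If additionally sⱼ ∈ ℝ and the linear combination ∑ᵢ πᵢ⁰ (∑_{j∈Bᵢ} qⱼθⱼ − θᵢ⁰)ᵀ gᵢ' + ∑ᵢ sᵢ g_{θᵢ⁰} + (1/2)∑ᵢ [2sᵢ(∑_{j∈Bᵢ} qⱼθⱼ − θᵢ⁰)ᵀ gᵢ' + πᵢ⁰ ∑_{j∈Bᵢ} qⱼ (θⱼ − θᵢ⁰)ᵀ gᵢ'' (θⱼ − θᵢ⁰)] = 0 in L²(μ), where the families (g_{θᵢ⁰}), (gᵢ'), (gᵢ'')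 are linearly independent in L²(μ), πᵢ⁰ > 0, and qⱼ > 0, then sᵢ = 0 for all i and θⱼ = θᵢ⁰ for all j ∈ Bᵢ. -/
/-!
Collecting terms, the expansion is a single linear combination of the independent family
`g0 i, G1 i a, G2 i a`, with coefficients `s i`, `(π₀ i + s i) (∑ q j θ j a - θ₀ i a)` and
`½ ∑_{j ∈ B⁻¹ i} π₀ i q j (θ j a - θ₀ i a)²`. Independence makes all of them vanish, and the
last one is a sum of positively weighted squares, so every `θ j a` equals `θ₀ (B j) a`.
-/

open MeasureTheory

theorem LinearIndependent.eq_zero_of_sum_add_sum_add_sum_eq_zero {R M ι κ ν : Type*}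
    [Ring R] [AddCommGroup M] [Module R M] [Fintype ι] [Fintype κ] [Fintype ν]
    {u : ι → M} {v : κ → M} {w : ν → M} (h : LinearIndependent R (Sum.elim u (Sum.elim v w)))
    {a : ι → R} {b : κ → R} {c : ν → R}
    (habc : ∑ i, a i • u i + ∑ k, b k • v k + ∑ l, c l • w l = 0) :
    a = 0 ∧ b = 0 ∧ c = 0 := by
  have hzero := Fintype.linearIndependent_iff.mp h (Sum.elim a (Sum.elim b c))
    (by simpa only [Fintype.sum_sum_type, Sum.elim_inl, Sum.elim_inr, add_assoc] using habc)
  exact ⟨funext fun i => hzero (.inl i), funext fun k => hzero (.inr (.inl k)),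
    funext fun l => hzero (.inr (.inr l))⟩

theorem Finset.eq_zero_of_sum_mul_sq_eq_zero {ι K : Type*} [Ring K] [LinearOrder K]
    [IsStrictOrderedRing K] {s : Finset ι} {w x : ι → K}
    (hw : ∀ j ∈ s, 0 < w j) (hsum : ∑ j ∈ s, w j * x j ^ 2 = 0) :
    ∀ j ∈ s, x j = 0 := by
  intro j hj
  have hterm := (Finset.sum_eq_zero_iff_of_nonneg fun j hj =>
    mul_nonneg (hw j hj).le (sq_nonneg (x j))).mp hsum j hj
  simpa [(hw j hj).ne'] using hterm

theorem stmt17_general {E : Type*} [MeasurableSpace E] (μ : Measure E)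
    (p p₀ d : ℕ) (B : Fin p → Fin p₀)
    (q : Fin p → ℝ) (hq : ∀ j, 0 < q j)
    (θ : Fin p → Fin d → ℝ) (θ₀ : Fin p₀ → Fin d → ℝ)
    (π₀ : Fin p₀ → ℝ) (hπ₀ : ∀ i, 0 < π₀ i)
    (s : Fin p₀ → ℝ)
    (g0 : Fin p₀ → Lp ℝ 2 μ) (G1 : Fin p₀ → Fin d → Lp ℝ 2 μ)
    (G2 : Fin p₀ → Fin d → Lp ℝ 2 μ)
    (hind : LinearIndependent ℝ
      (Sum.elim (fun i : Fin p₀ => g0 i)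
        (Sum.elim (fun x : Fin p₀ × Fin d => G1 x.1 x.2)
          (fun x : Fin p₀ × Fin d => G2 x.1 x.2))))
    (heq :
      (∑ i, ∑ a,
          (π₀ i * ((∑ j ∈ Finset.univ.filter (fun j => B j = i), q j * θ j a)
            - θ₀ i a)) • G1 i a)
      + (∑ i, s i • g0 i)
      + (1 / 2 : ℝ) •
        (∑ i,
          ((∑ a, (2 * s i * ((∑ j ∈ Finset.univ.filter (fun j => B j = i),
              q j * θ j a) - θ₀ i a)) • G1 i a)
          + ∑ j ∈ Finset.univ.filter (fun j => B j = i), ∑ a,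
              (π₀ i * q j * (θ j a - θ₀ i a) ^ 2) • G2 i a)) = 0) :
    (∀ i, s i = 0) ∧ ∀ j, θ j = θ₀ (B j) := by
  set m : Fin p₀ → Fin d → ℝ := fun i a =>
    (∑ j ∈ Finset.univ.filter (fun j => B j = i), q j * θ j a) - θ₀ i a
  set V : Fin p₀ → Fin d → ℝ := fun i a =>
    ∑ j ∈ Finset.univ.filter (fun j => B j = i), π₀ i * q j * (θ j a - θ₀ i a) ^ 2
  have hcollect : ∑ i, s i • g0 i
      + ∑ x : Fin p₀ × Fin d, ((π₀ x.1 + s x.1) * m x.1 x.2) • G1 x.1 x.2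
      + ∑ x : Fin p₀ × Fin d, ((1 / 2 : ℝ) * V x.1 x.2) • G2 x.1 x.2 = 0 := by
    rw [← heq]
    have half_two (x y : ℝ) : 1 / 2 * (2 * x * y) = x * y := by ring
    simp only [m, V, Fintype.sum_prod_type, Finset.mul_sum, Finset.sum_smul, Finset.smul_sum,
      smul_smul, half_two, add_mul, add_smul, smul_add, Finset.sum_add_distrib]
    rw [Finset.sum_congr rfl fun i _ => Finset.sum_comm (s := Finset.univ.filter (B · = i))]
    abel
  obtain ⟨hs, -, hV⟩ := hind.eq_zero_of_sum_add_sum_add_sum_eq_zero hcollect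
  refine ⟨congrFun hs, fun j => funext fun a => sub_eq_zero.mp ?_⟩
  have hVj : V (B j) a = 0 := by simpa using congrFun hV (B j, a)
  exact Finset.eq_zero_of_sum_mul_sq_eq_zero
    (fun j' _ => mul_pos (hπ₀ (B j)) (hq j')) hVj j (by simp)

theorem stmt17 {E : Type*} [MeasurableSpace E] (μ : Measure E)
    (p p₀ d : ℕ) (B : Fin p → Fin p₀) (hB : Function.Surjective B)
    (q : Fin p → ℝ) (hq : ∀ j, 0 < q j)
    (hq1 : ∀ i, ∑ j ∈ Finset.univ.filter (fun j => B j = i), q j = 1)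
    (θ : Fin p → Fin d → ℝ) (θ₀ : Fin p₀ → Fin d → ℝ)
    (π₀ : Fin p₀ → ℝ) (hπ₀ : ∀ i, 0 < π₀ i)
    (s : Fin p₀ → ℝ)
    (g0 : Fin p₀ → Lp ℝ 2 μ) (G1 : Fin p₀ → Fin d → Lp ℝ 2 μ)
    (G2 : Fin p₀ → Fin d → Lp ℝ 2 μ)
    (hind : LinearIndependent ℝ
      (Sum.elim (fun i : Fin p₀ => g0 i)
        (Sum.elim (fun x : Fin p₀ × Fin d => G1 x.1 x.2)
          (fun x : Fin p₀ × Fin d => G2 x.1 x.2))))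
    (heq :
      (∑ i, ∑ a,
          (π₀ i * ((∑ j ∈ Finset.univ.filter (fun j => B j = i), q j * θ j a)
            - θ₀ i a)) • G1 i a)
      + (∑ i, s i • g0 i)
      + (1 / 2 : ℝ) •
        (∑ i,
          ((∑ a, (2 * s i * ((∑ j ∈ Finset.univ.filter (fun j => B j = i),
              q j * θ j a) - θ₀ i a)) • G1 i a)
          + ∑ j ∈ Finset.univ.filter (fun j => B j = i), ∑ a,
              (π₀ i * q j * (θ j a - θ₀ i a) ^ 2) • G2 i a)) = 0) :
    (∀ i, s i = 0) ∧ ∀ j, θ j = θ₀ (B j) :=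
  stmt17_general μ p p₀ d B q hq θ θ₀ π₀ hπ₀ s g0 G1 G2 hind heq
end
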